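/- Assume s ≥ 2, let 0 < c < 1 and p = c·Q^{−(s−2)/(s−1)} (assume 0 < p < 1). Then: (a) for each i, E[V_i] ≥ c·Q^{1/(s−1)}; (b) E[X_m] ≤ c^s·binom(m,s)·Q^{1/(s−1)}; and (c) E[X] ≤ c^s·binom(m,s)·Q^{1/(s−1)} + 3^m·Q^{−1/(s−1)}. -/

import Mathlib

open scoped Classical
noncomputable section

variable {F : Type} [Field F]

/-- Projective points of `F^k`. -/
abbrev Pt (F : Type) [Field F] (k : ℕ) := Projectivization F (Fin k → F)

/-- Linear span of a set of projective points. -/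
def pspan {k : ℕ} (T : Set (Pt F k)) : Submodule F (Fin k → F) :=
  ⨆ x ∈ T, x.submodule

/-- A finite set of projective points is dependent if the dimension of its linear span is
at most its cardinality minus one. -/
def Dep {k : ℕ} (T : Finset (Pt F k)) : Prop :=
  Module.finrank F (pspan (T : Set (Pt F k))) + 1 ≤ T.card

/-- A circuit is a dependent set that is minimal with respect to inclusion. -/
def IsCircuit {k : ℕ} (T : Finset (Pt F k)) : Prop :=
  Dep T ∧ ∀ T' ⊂ T, ¬ Dep T'

/-- A crossing circuit (for the line configuration `L`): a circuit contained in the union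
of the lines which contains at most one point on each line. -/
def CrossingCircuit {k m : ℕ} (L : Fin m → Submodule F (Fin k → F))
    (T : Finset (Pt F k)) : Prop :=
  IsCircuit T ∧ (∀ x ∈ T, ∃ i, x.submodule ≤ L i) ∧
    ∀ i, (T.filter fun x => x.submodule ≤ L i).card ≤ 1

/-- Weight of the subset `Γ` of `ΩF` under the product Bernoulli(`p`) measure on the
subsets of `ΩF`. -/
def bwt (p : ℝ) {k : ℕ} (ΩF Γ : Finset (Pt F k)) : ℝ :=
  p ^ Γ.card * (1 - p) ^ (ΩF.card - Γ.card)

/-- Expectation of the random variable `Y` under the product Bernoulli(`p`) measure `μ_p`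
on the subsets of `ΩF`. -/
def expec (p : ℝ) {k : ℕ} (ΩF : Finset (Pt F k)) (Y : Finset (Pt F k) → ℝ) : ℝ :=
  ∑ Γ ∈ ΩF.powerset, bwt p ΩF Γ * Y Γ

/-- Probability of the event `E` under the product Bernoulli(`p`) measure `μ_p` on the
subsets of `ΩF`. -/
def prob (p : ℝ) {k : ℕ} (ΩF : Finset (Pt F k)) (E : Finset (Pt F k) → Prop) : ℝ :=
  ∑ Γ ∈ ΩF.powerset.filter E, bwt p ΩF Γ

/-- `V_i(Γ)`: the number of points of `Γ` on the line `L`. -/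
def Vline {k : ℕ} (L : Submodule F (Fin k → F)) (Γ : Finset (Pt F k)) : ℕ :=
  (Γ.filter fun x => x.submodule ≤ L).card

/-- `X_u(Γ)`: the number of pairs `(D, J)` with `D ⊆ Ω` a crossing circuit of size `u` and
`J ⊆ D ∩ Γ` of size `2u - k`. -/
def Xu {k m : ℕ} (L : Fin m → Submodule F (Fin k → F)) (u : ℕ)
    (Γ : Finset (Pt F k)) : ℕ :=
  Set.ncard {DJ : Finset (Pt F k) × Finset (Pt F k) |
    CrossingCircuit L DJ.1 ∧ DJ.1.card = u ∧
    DJ.2 ⊆ DJ.1 ∩ Γ ∧ DJ.2.card = 2 * u - k}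

/-- `X = ∑_{u = ⌈(k+1)/2⌉}^{m} X_u`. -/
def Xtot {k m : ℕ} (L : Fin m → Submodule F (Fin k → F)) (Γ : Finset (Pt F k)) : ℕ :=
  ∑ u ∈ Finset.Icc ((k + 2) / 2) m, Xu L u Γ

/-!
Under `μ_p`, a count of the form `#{b ∈ I | J b ⊆ Γ}` has expectation `∑ b ∈ I, p ^ #(J b)`.
Hence `E[V_i] = (q + 1) p`, and `E[X_u]` is at most the number of crossing circuits of size `u`
times `C(u, 2u - k) p ^ (2u - k)`.

A crossing circuit `D` meets a set `S` of `u` lines, and its linear relation, written in the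
vectors `P i, Q i` (`i ∈ S`), is a nonzero kernel vector of `μ ↦ ∑ i ∈ S, μᵢ P i + μ'ᵢ Q i` that
determines `D`. By general position this kernel has dimension at most `2u - k`, so there are at
most `C(m, u) (1 + q + ⋯ + q ^ (2u - k - 1)) ≤ C(m, u) Q ^ (2u - k - 1)` such circuits.

For `t = 2u - k` and `p = c Q ^ (-(s - 2) / (s - 1))` one has
`Q ^ (t - 1) p ^ t = c ^ t Q ^ ((t - s + 1) / (s - 1))`. The exponent is `1 / (s - 1)` when
`u = m`, and at most `-1 / (s - 1)` when `u < m`; the latter terms sum to at most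
`∑ u, C(m, u) 2 ^ u = 3 ^ m`.
-/

open Finset Function
open scoped LinearAlgebra.Projectivization

section Bernoulli

variable {k : ℕ} (p : ℝ) (S : Finset (Pt F k))

lemma prob_superset {J : Finset (Pt F k)} (hJ : J ⊆ S) : prob p S (J ⊆ ·) = p ^ #J := by
  have hpow : ∀ Γ ∈ {Γ ∈ S.powerset | J ⊆ Γ},
      bwt p S Γ = p ^ #J * (p ^ #(Γ \ J) * (1 - p) ^ (#(S \ J) - #(Γ \ J))) := by
    intro Γ hΓ
    obtain ⟨-, hJΓ⟩ := mem_filter.mp hΓ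
    rw [bwt, card_sdiff_of_subset hJΓ, card_sdiff_of_subset hJ, ← mul_assoc, ← pow_add,
      Nat.add_sub_cancel' (card_le_card hJΓ), Nat.sub_sub_sub_cancel_right (card_le_card hJΓ)]
  rw [prob, filter_congr_decidable, sum_congr rfl hpow, ← mul_sum]
  convert mul_one (p ^ #J) using 2
  calc ∑ Γ ∈ S.powerset with J ⊆ Γ, p ^ #(Γ \ J) * (1 - p) ^ (#(S \ J) - #(Γ \ J))
      = ∑ A ∈ (S \ J).powerset, p ^ #A * (1 - p) ^ (#(S \ J) - #A) :=
        sum_nbij' (· \ J) (· ∪ J) ?_ ?_ ?_ ?_ (fun _ _ => rfl)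
    _ = 1 := by rw [sum_pow_mul_eq_add_pow, add_sub_cancel, one_pow]
  · intro Γ hΓ
    simp only [mem_filter, mem_powerset] at hΓ ⊢
    exact sdiff_subset_sdiff hΓ.1 le_rfl
  · intro A hA
    simp only [mem_filter, mem_powerset] at hA ⊢
    exact ⟨union_subset (hA.trans sdiff_subset) hJ, subset_union_right⟩
  · intro Γ hΓ
    exact sdiff_union_of_subset (mem_filter.mp hΓ).2
  · intro A hA
    exact union_sdiff_cancel_right (disjoint_of_subset_left (mem_powerset.mp hA) sdiff_disjoint)

lemma expec_congr {Y Z : Finset (Pt F k) → ℝ} (h : ∀ Γ ⊆ S, Y Γ = Z Γ) :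
    expec p S Y = expec p S Z :=
  sum_congr rfl fun Γ hΓ => by rw [h Γ (mem_powerset.mp hΓ)]

lemma expec_sum {β : Type*} (I : Finset β) (Y : β → Finset (Pt F k) → ℝ) :
    expec p S (fun Γ => ∑ b ∈ I, Y b Γ) = ∑ b ∈ I, expec p S (Y b) := by
  simp only [expec, mul_sum]
  exact sum_comm

lemma expec_card_filter_subset {β : Type*} (I : Finset β) (J : β → Finset (Pt F k))
    (hJ : ∀ b ∈ I, J b ⊆ S) :
    expec p S (fun Γ => (#{b ∈ I | J b ⊆ Γ} : ℝ)) = ∑ b ∈ I, p ^ #(J b) := by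
  simp only [card_filter, Nat.cast_sum, Nat.cast_ite, Nat.cast_one, Nat.cast_zero]
  rw [expec_sum]
  refine sum_congr rfl fun b hb => ?_
  rw [expec, ← prob_superset p S (hJ b hb), prob, filter_congr_decidable, sum_filter]
  simp only [mul_ite, mul_one, mul_zero]

end Bernoulli

namespace Projectivization

variable {K V : Type*} [DivisionRing K] [AddCommGroup V] [Module K V]

instance [Finite V] : Fintype (ℙ K V) := Fintype.ofFinite _

lemma rep_mem_submodule (x : ℙ K V) : x.rep ∈ x.submodule := by
  rw [submodule_eq]
  exact Submodule.mem_span_singleton_self _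

lemma range_map_subtype (W : Submodule K V) :
    Set.range (map W.subtype W.injective_subtype) = {x : ℙ K V | x.submodule ≤ W} := by
  ext x
  constructor
  · rintro ⟨y, rfl⟩
    induction y using ind with
    | h w hw =>
      simp [map_mk, submodule_mk, Submodule.span_singleton_le_iff_mem]
  · intro hx
    have hw : (⟨x.rep, hx x.rep_mem_submodule⟩ : W) ≠ 0 := fun h =>
      x.rep_nonzero (congrArg Subtype.val h)
    exact ⟨mk K _ hw, by rw [map_mk]; exact x.mk_rep⟩

lemma natCard_submodule_le (W : Submodule K V) :
    Nat.card {x : ℙ K V // x.submodule ≤ W} = Nat.card (ℙ K W) :=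
  (Nat.card_congr ((Equiv.ofInjective _ (map_injective W.subtype _)).trans
    (Equiv.setCongr (range_map_subtype W)))).symm

end Projectivization

open Projectivization

lemma card_filter_submodule_le {K V : Type*} [DivisionRing K] [AddCommGroup V] [Module K V]
    (W : Submodule K V) {Ω : Finset (ℙ K V)} (hΩ : ∀ x : ℙ K V, x.submodule ≤ W → x ∈ Ω) :
    #{x ∈ Ω | x.submodule ≤ W} = Nat.card (ℙ K W) := by
  rw [← natCard_submodule_le, ← Nat.card_eq_finsetCard]
  exact Nat.card_congr (Equiv.subtypeEquivRight fun x => by simpa using hΩ x)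

section GeneralPosition

variable {V : Type*} [AddCommGroup V] [Module F V] {ι : Type*}

variable (F) in
def InGeneralPosition (k : ℕ) (v : ι → V) : Prop :=
  ∀ T : Finset ι, #T ≤ k → LinearIndepOn F v (T : Set ι)

namespace InGeneralPosition

variable {k : ℕ} {v : ι → V}

lemma comp {κ : Type*} (hv : InGeneralPosition F k v) {f : κ → ι} (hf : Injective f) :
    InGeneralPosition F k (v ∘ f) := fun T hT =>
  LinearIndepOn.comp_of_image (by simpa using hv (T.map ⟨f, hf⟩) (by simpa using hT))
    hf.injOn

lemma finrank_span_image (hv : InGeneralPosition F k v) {T : Finset ι} (hT : #T ≤ k) :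
    Module.finrank F (Submodule.span F (v '' T)) = #T := by
  rw [Set.image_eq_range, finrank_span_eq_card (hv T hT)]
  simp

lemma disjoint_span_image (hv : InGeneralPosition F k v) {s t : Finset ι} (hst : Disjoint s t)
    (hk : #s + #t ≤ k) :
    Disjoint (Submodule.span F (v '' s)) (Submodule.span F (v '' t)) := by
  have hli := hv (s ∪ t) ((card_union_le s t).trans hk)
  rw [coe_union, linearIndepOn_union_iff (disjoint_coe.mpr hst)] at hli
  exact hli.2.2

lemma finrank_ker_linearCombination_add_le [Fintype ι] (hv : InGeneralPosition F k v)
    (hk : k ≤ Fintype.card ι) :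
    Module.finrank F (LinearMap.ker (Fintype.linearCombination F v)) + k ≤ Fintype.card ι := by
  obtain ⟨T, -, hT⟩ := exists_subset_card_eq (s := (univ : Finset ι)) (by simpa using hk)
  have hrange : k ≤ Module.finrank F (LinearMap.range (Fintype.linearCombination F v)) := by
    rw [← hT, ← hv.finrank_span_image hT.le]
    refine Submodule.finrank_mono ?_
    rw [Fintype.range_linearCombination]
    exact Submodule.span_mono (Set.image_subset_range v T)
  have := LinearMap.finrank_range_add_finrank_ker (Fintype.linearCombination F v)
  rw [Module.finrank_fintype_fun_eq_card] at this
  omega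

end InGeneralPosition

end GeneralPosition

section Lines

variable {V : Type*} [AddCommGroup V] [Module F V] {m k : ℕ} {P Q : Fin m → V}

lemma span_pair_eq_span_image (i : Fin m) :
    Submodule.span F {P i, Q i} =
      Submodule.span F (Sum.elim P Q '' ({Sum.inl i, Sum.inr i} : Finset (Fin m ⊕ Fin m))) := by
  simp [Set.image_insert_eq]

lemma InGeneralPosition.finrank_span_pair (hv : InGeneralPosition F k (Sum.elim P Q))
    (hk : 2 ≤ k) (i : Fin m) : Module.finrank F (Submodule.span F {P i, Q i}) = 2 := by
  rw [span_pair_eq_span_image, hv.finrank_span_image (by simpa using hk)]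
  simp

lemma InGeneralPosition.pairwise_disjoint_span_pair (hv : InGeneralPosition F k (Sum.elim P Q))
    (hk : 4 ≤ k) : Pairwise (Disjoint on fun i => Submodule.span F {P i, Q i}) := by
  intro i j hij
  simp only [onFun, span_pair_eq_span_image]
  exact hv.disjoint_span_image (by simp [hij.symm]) (by simpa using hk)

variable (F) in
def pairComb (P Q : Fin m → V) (S : Finset (Fin m)) : (S ⊕ S → F) →ₗ[F] V :=
  Fintype.linearCombination F (Sum.elim P Q ∘ Sum.map (↑) (↑))

lemma pairComb_apply (S : Finset (Fin m)) (μ : S ⊕ S → F) :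
    pairComb F P Q S μ = ∑ i : S, (μ (Sum.inl i) • P i + μ (Sum.inr i) • Q i) := by
  simp [pairComb, Fintype.linearCombination_apply, Fintype.sum_sum_type, sum_add_distrib]

lemma InGeneralPosition.finrank_ker_pairComb_add_le (hv : InGeneralPosition F k (Sum.elim P Q))
    {S : Finset (Fin m)} (hS : k ≤ 2 * #S) :
    Module.finrank F (LinearMap.ker (pairComb F P Q S)) + k ≤ 2 * #S := by
  have hinj : Injective (Sum.map ((↑) : S → Fin m) ((↑) : S → Fin m)) :=
    Sum.map_injective.mpr ⟨Subtype.val_injective, Subtype.val_injective⟩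
  have hcard : Fintype.card (S ⊕ S) = 2 * #S := by simp [two_mul]
  rw [← hcard] at hS ⊢
  exact (hv.comp hinj).finrank_ker_linearCombination_add_le hS

def pairPoints (P Q : Fin m → V) (S : Finset (Fin m)) (μ : S ⊕ S → F) : Set (ℙ F V) :=
  {x | ∃ i : S, x.submodule = F ∙ (μ (Sum.inl i) • P i + μ (Sum.inr i) • Q i)}

lemma pairPoints_smul (S : Finset (Fin m)) (a : Fˣ) (μ : S ⊕ S → F) :
    pairPoints P Q S (a • μ) = pairPoints P Q S μ := by
  have hsmul : ∀ i : S, (a • μ) (Sum.inl i) • P i + (a • μ) (Sum.inr i) • Q i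
      = (a : F) • (μ (Sum.inl i) • P i + μ (Sum.inr i) • Q i) := by
    intro i
    simp only [Pi.smul_apply, Units.smul_def, smul_eq_mul, mul_smul, smul_add]
  simp only [pairPoints, hsmul, Submodule.span_singleton_smul_eq a.isUnit]

end Lines

section Circuits

variable {k : ℕ}

lemma pspan_eq_span_image_rep (T : Set (Pt F k)) :
    pspan T = Submodule.span F (Projectivization.rep '' T) := by
  rw [pspan, Submodule.span_eq_iSup_of_singleton_spans, iSup_image]
  simp only [submodule_eq]

lemma dep_iff_not_linearIndepOn (T : Finset (Pt F k)) :
    Dep T ↔ ¬ LinearIndepOn F (Projectivization.rep : Pt F k → Fin k → F) T := by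
  have hle := finrank_range_le_card (R := F) (fun x : (T : Set (Pt F k)) => x.1.rep)
  rw [Dep, LinearIndepOn, linearIndependent_iff_card_eq_finrank_span, pspan_eq_span_image_rep,
    Set.image_eq_range]
  have hcard : Fintype.card (T : Set (Pt F k)) = #T := by simp
  simp only [Set.finrank] at hle ⊢
  omega

lemma IsCircuit.nonempty {D : Finset (Pt F k)} (hD : IsCircuit D) : D.Nonempty :=
  card_pos.mp (by have := hD.1; unfold Dep at this; omega)

lemma IsCircuit.exists_relation {D : Finset (Pt F k)} (hD : IsCircuit D) :
    ∃ g : Pt F k → F, ∑ x ∈ D, g x • x.rep = 0 ∧ ∀ x ∈ D, g x ≠ 0 := by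
  obtain ⟨g, hg, x₁, hx₁, hgx₁⟩ :=
    not_linearIndepOn_finset_iff.mp ((dep_iff_not_linearIndepOn D).mp hD.1)
  refine ⟨g, hg, fun x₀ hx₀ hgx₀ => hD.2 _ (erase_ssubset hx₀) ?_⟩
  -- a relation vanishing at `x₀` is a relation on `D.erase x₀`, contradicting minimality
  refine (dep_iff_not_linearIndepOn _).mpr (not_linearIndepOn_finset_iff.mpr
    ⟨g, ?_, x₁, mem_erase.mpr ⟨fun h => hgx₁ (h ▸ hgx₀), hx₁⟩, hgx₁⟩)
  rwa [sum_erase _ (by rw [hgx₀, zero_smul])]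

variable {m : ℕ} {L : Fin m → Submodule F (Fin k → F)}

def lineSet (L : Fin m → Submodule F (Fin k → F)) (D : Finset (Pt F k)) : Finset (Fin m) :=
  {i | ∃ x ∈ D, x.submodule ≤ L i}

lemma CrossingCircuit.exists_equiv_lineSet (hL : Pairwise (Disjoint on L)) {D : Finset (Pt F k)}
    (hD : CrossingCircuit L D) : ∃ e : lineSet L D ≃ D, ∀ i, (e i : Pt F k).submodule ≤ L i := by
  have hpt : ∀ i : lineSet L D, ∃ x ∈ D, x.submodule ≤ L i := fun i => by
    simpa [lineSet] using i.2
  choose pt hptD hptL using hpt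
  have hinj : Injective fun i => (⟨pt i, hptD i⟩ : D) := by
    intro i j hij
    replace hij : pt i = pt j := congrArg Subtype.val hij
    by_contra hne
    refine (pt i).rep_nonzero (Submodule.disjoint_def.mp (hL (Subtype.coe_ne_coe.mpr hne)) _
      (hptL i (pt i).rep_mem_submodule) (hptL j ?_))
    rw [← hij]
    exact (pt i).rep_mem_submodule
  have hsurj : Surjective fun i => (⟨pt i, hptD i⟩ : D) := by
    rintro ⟨x, hx⟩
    obtain ⟨i, hi⟩ := hD.2.1 x hx
    have hiD : i ∈ lineSet L D := by simpa [lineSet] using ⟨x, hx, hi⟩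
    refine ⟨⟨i, hiD⟩, Subtype.ext (card_le_one.mp (hD.2.2 i) _ ?_ _ ?_)⟩ <;>
      simp only [mem_filter]
    exacts [⟨hptD _, hptL _⟩, ⟨hx, hi⟩]
  exact ⟨Equiv.ofBijective _ ⟨hinj, hsurj⟩, hptL⟩

lemma CrossingCircuit.card_lineSet (hL : Pairwise (Disjoint on L)) {D : Finset (Pt F k)}
    (hD : CrossingCircuit L D) : #(lineSet L D) = #D := by
  obtain ⟨e, -⟩ := hD.exists_equiv_lineSet hL
  simpa using Fintype.card_congr e

end Circuits

section CrossingCircuits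

variable {m k : ℕ} {P Q : Fin m → Fin k → F}

lemma CrossingCircuit.exists_mem_ker_pairComb
    (hL : Pairwise (Disjoint on fun i => Submodule.span F {P i, Q i})) {D : Finset (Pt F k)}
    (hD : CrossingCircuit (fun i => Submodule.span F {P i, Q i}) D) :
    ∃ μ ∈ LinearMap.ker (pairComb F P Q (lineSet (fun i => Submodule.span F {P i, Q i}) D)),
      μ ≠ 0 ∧ (D : Set (Pt F k)) = pairPoints P Q _ μ := by
  set S := lineSet (fun i => Submodule.span F {P i, Q i}) D
  obtain ⟨g, hg, hg0⟩ := hD.1.exists_relation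
  obtain ⟨e, he⟩ := hD.exists_equiv_lineSet hL
  choose a b hab using fun i : S => Submodule.mem_span_pair.mp (he i (e i).1.rep_mem_submodule)
  set μ : S ⊕ S → F := Sum.elim (fun i => g (e i) * a i) (fun i => g (e i) * b i)
  have hμ : ∀ i, μ (Sum.inl i) • P i + μ (Sum.inr i) • Q i = g (e i) • (e i : Pt F k).rep := by
    intro i
    simp only [μ, Sum.elim_inl, Sum.elim_inr, mul_smul, ← smul_add, hab]
  have hspan : ∀ i, F ∙ (μ (Sum.inl i) • P i + μ (Sum.inr i) • Q i) = (e i : Pt F k).submodule := by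
    intro i
    rw [hμ, Submodule.span_singleton_smul_eq (hg0 _ (e i).2).isUnit, submodule_eq]
  refine ⟨μ, ?_, ?_, ?_⟩
  · rw [LinearMap.mem_ker, pairComb_apply, ← hg, ← sum_coe_sort D]
    simp only [hμ]
    exact e.sum_comp fun x : D => g x • (x : Pt F k).rep
  · obtain ⟨x, hx⟩ := hD.1.nonempty
    intro h0
    have := hμ (e.symm ⟨x, hx⟩)
    simp only [h0, Pi.zero_apply, zero_smul, add_zero, Equiv.apply_symm_apply] at this
    exact smul_ne_zero (hg0 x hx) x.rep_nonzero this.symm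
  · ext x
    simp only [pairPoints, hspan, Set.mem_ofPred_eq, mem_coe]
    constructor
    · intro hx
      exact ⟨e.symm ⟨x, hx⟩, by simp⟩
    · rintro ⟨i, hi⟩
      rw [submodule_injective hi]
      exact (e i).2

end CrossingCircuits

section Counting

variable {m k : ℕ} {P Q : Fin m → Fin k → F}

lemma sum_range_pow_le_succ_pow (q t : ℕ) : ∑ i ∈ range t, q ^ i ≤ (q + 1) ^ (t - 1) := by
  rcases t with _ | t
  · simp
  rw [add_tsub_cancel_right, add_pow]
  exact sum_le_sum fun i hi => by
    simpa using Nat.le_mul_of_pos_right _ (Nat.choose_pos (Nat.lt_succ_iff.mp (mem_range.mp hi)))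

lemma card_crossingCircuits_le [Fintype F] (hv : InGeneralPosition F k (Sum.elim P Q))
    (hk : 4 ≤ k) (Ω : Finset (Pt F k)) {u : ℕ} (hu : k ≤ 2 * u) :
    #{D ∈ Ω.powerset | CrossingCircuit (fun i => Submodule.span F {P i, Q i}) D ∧ #D = u}
      ≤ m.choose u * (Fintype.card F + 1) ^ (2 * u - k - 1) := by
  set L := fun i => Submodule.span F {P i, Q i}
  have hL := hv.pairwise_disjoint_span_pair hk
  -- a crossing circuit is determined by its lines `S` and a point of `ℙ(ker (pairComb F P Q S))`
  let circuitOf (S : Finset (Fin m)) (x : ℙ F (LinearMap.ker (pairComb F P Q S))) :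
      Finset (Pt F k) := {y | y ∈ pairPoints P Q S (x.rep : S ⊕ S → F)}
  have hsub : {D ∈ Ω.powerset | CrossingCircuit L D ∧ #D = u} ⊆
      (powersetCard u univ).biUnion fun S => univ.image (circuitOf S) := by
    intro D hD
    obtain ⟨-, hDL, rfl⟩ := mem_filter.mp hD
    obtain ⟨μ, hμ, hμ0, hDμ⟩ := hDL.exists_mem_ker_pairComb hL
    have hμ0' : (⟨μ, hμ⟩ : LinearMap.ker _) ≠ 0 := fun h => hμ0 (congrArg Subtype.val h)
    obtain ⟨a, ha⟩ := exists_smul_eq_mk_rep F _ hμ0'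
    refine mem_biUnion.mpr ⟨lineSet L D, mem_powersetCard_univ.mpr (hDL.card_lineSet hL),
      mem_image.mpr ⟨mk F _ hμ0', mem_univ _, ?_⟩⟩
    ext y
    simpa [circuitOf, ← ha, pairPoints_smul] using (Set.ext_iff.mp hDμ y).symm
  have hfiber : ∀ S ∈ powersetCard u (univ : Finset (Fin m)),
      #(univ.image (circuitOf S)) ≤ (Fintype.card F + 1) ^ (2 * u - k - 1) := by
    intro S hS
    rw [mem_powersetCard_univ] at hS
    have hker := hv.finrank_ker_pairComb_add_le (S := S) (by omega)
    calc #(univ.image (circuitOf S))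
        ≤ Nat.card (ℙ F (LinearMap.ker (pairComb F P Q S))) :=
          card_image_le.trans (card_univ.trans Nat.card_eq_fintype_card.symm).le
      _ = ∑ i ∈ range (Module.finrank F (LinearMap.ker (pairComb F P Q S))),
            Fintype.card F ^ i := by
          rw [card_of_finrank F _ rfl, Nat.card_eq_fintype_card]
      _ ≤ ∑ i ∈ range (2 * u - k), Fintype.card F ^ i :=
          sum_le_sum_of_subset (range_subset_range.mpr (by omega))
      _ ≤ (Fintype.card F + 1) ^ (2 * u - k - 1) := sum_range_pow_le_succ_pow _ _
  calc _ ≤ _ := card_le_card hsub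
    _ ≤ ∑ S ∈ powersetCard u univ, #(univ.image (circuitOf S)) := card_biUnion_le
    _ ≤ _ := by
      grw [sum_le_sum hfiber, sum_const, card_powersetCard, card_univ, Fintype.card_fin,
        smul_eq_mul]

end Counting

section Expectations

variable {m k : ℕ} (p : ℝ) {Ω : Finset (Pt F k)}

lemma expec_Vline (W : Submodule F (Fin k → F)) :
    expec p Ω (fun Γ => (Vline W Γ : ℝ)) = #{x ∈ Ω | x.submodule ≤ W} * p := by
  have hV : ∀ Γ ⊆ Ω, (Vline W Γ : ℝ) = #{x ∈ {x ∈ Ω | x.submodule ≤ W} | {x} ⊆ Γ} := by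
    intro Γ hΓ
    rw [Vline]
    congr 2
    ext x
    simp only [mem_filter, singleton_subset_iff]
    exact ⟨fun h => ⟨⟨hΓ h.1, h.2⟩, h.1⟩, fun h => ⟨h.2, h.1.2⟩⟩
  rw [expec_congr p Ω hV, expec_card_filter_subset p Ω _ _ fun x hx =>
    singleton_subset_iff.mpr (mem_filter.mp hx).1]
  simp

lemma expec_Xu_le_card_mul {L : Fin m → Submodule F (Fin k → F)}
    (hΩ : ∀ x : Pt F k, (∃ i, x.submodule ≤ L i) → x ∈ Ω) (hp : 0 ≤ p) (u : ℕ) :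
    expec p Ω (fun Γ => (Xu L u Γ : ℝ)) ≤
      #{D ∈ Ω.powerset | CrossingCircuit L D ∧ #D = u} * u.choose (2 * u - k)
        * p ^ (2 * u - k) := by
  set CC := {D ∈ Ω.powerset | CrossingCircuit L D ∧ #D = u}
  set pairs := CC.biUnion fun D => (D.powersetCard (2 * u - k)).image (Prod.mk D)
  have hX : ∀ Γ, (Xu L u Γ : ℝ) = #{DJ ∈ pairs | DJ.2 ⊆ Γ} := by
    intro Γ
    rw [Xu, ← Set.ncard_coe_finset]
    congr 2
    ext ⟨D, J⟩
    simp only [Set.mem_ofPred_eq, coe_filter, pairs, CC, mem_biUnion, mem_image, mem_filter,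
      mem_powerset, mem_powersetCard, Prod.mk.injEq, subset_inter_iff]
    constructor
    · rintro ⟨hD, hDu, ⟨hJD, hJΓ⟩, hJ⟩
      exact ⟨⟨D, ⟨fun x hx => hΩ x (hD.2.1 x hx), hD, hDu⟩, J, ⟨hJD, hJ⟩, rfl, rfl⟩, hJΓ⟩
    · rintro ⟨⟨D, ⟨-, hD, hDu⟩, J, ⟨hJD, hJ⟩, rfl, rfl⟩, hJΓ⟩
      exact ⟨hD, hDu, ⟨hJD, hJΓ⟩, hJ⟩
  have hpairs : ∀ DJ ∈ pairs, p ^ #DJ.2 = p ^ (2 * u - k) := by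
    intro DJ hDJ
    simp only [pairs, mem_biUnion, mem_image, mem_powersetCard] at hDJ
    obtain ⟨D, -, J, ⟨-, hJ⟩, rfl⟩ := hDJ
    rw [hJ]
  have hcard : #pairs ≤ #CC * u.choose (2 * u - k) := by
    refine card_biUnion_le.trans ((sum_le_sum fun D hD => card_image_le).trans_eq ?_)
    rw [sum_congr rfl fun D hD => by rw [card_powersetCard, (mem_filter.mp hD).2.2],
      sum_const, smul_eq_mul]
  rw [expec_congr p Ω fun Γ _ => hX Γ, expec_card_filter_subset p Ω pairs Prod.snd ?_,
    sum_congr rfl hpairs, sum_const, nsmul_eq_mul]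
  · exact mul_le_mul_of_nonneg_right (by exact_mod_cast hcard) (pow_nonneg hp _)
  · intro DJ hDJ
    simp only [pairs, CC, mem_biUnion, mem_image, mem_powersetCard, mem_filter, mem_powerset] at hDJ
    obtain ⟨D, ⟨hDΩ, -⟩, J, ⟨hJD, -⟩, rfl⟩ := hDJ
    exact hJD.trans hDΩ

end Expectations

section SpanPairs

variable [Fintype F] {m k : ℕ} {P Q : Fin m → Fin k → F} (p : ℝ) {Ω : Finset (Pt F k)}

lemma expec_Vline_span_pair (hv : InGeneralPosition F k (Sum.elim P Q)) (hk : 2 ≤ k)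
    (hΩ : ∀ x : Pt F k, (∃ i, x.submodule ≤ Submodule.span F {P i, Q i}) → x ∈ Ω) (i : Fin m) :
    expec p Ω (fun Γ => (Vline (Submodule.span F {P i, Q i}) Γ : ℝ))
      = ((Fintype.card F : ℝ) + 1) * p := by
  rw [expec_Vline, card_filter_submodule_le _ fun x hx => hΩ x ⟨i, hx⟩,
    card_of_finrank_two F _ (hv.finrank_span_pair hk i), Nat.card_eq_fintype_card]
  push_cast
  rfl

lemma expec_Xu_le (hv : InGeneralPosition F k (Sum.elim P Q)) (hk : 4 ≤ k)
    (hΩ : ∀ x : Pt F k, (∃ i, x.submodule ≤ Submodule.span F {P i, Q i}) → x ∈ Ω) (hp : 0 ≤ p)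
    {u : ℕ} (hu : k ≤ 2 * u) :
    expec p Ω (fun Γ => (Xu (fun i => Submodule.span F {P i, Q i}) u Γ : ℝ))
      ≤ m.choose u * u.choose (2 * u - k) *
          (((Fintype.card F : ℝ) + 1) ^ (2 * u - k - 1) * p ^ (2 * u - k)) := by
  calc _ ≤ _ := expec_Xu_le_card_mul p hΩ hp u
    _ ≤ ((m.choose u * (Fintype.card F + 1) ^ (2 * u - k - 1) : ℕ) : ℝ) * u.choose (2 * u - k)
          * p ^ (2 * u - k) := by
        gcongr
        exact card_crossingCircuits_le hv hk Ω hu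
    _ = _ := by push_cast; ring

end SpanPairs

section Exponents

variable {Q c s : ℝ}

lemma mul_mul_rpow_eq (hQ : 0 < Q) (hs : s ≠ 1) :
    Q * (c * Q ^ (-((s - 2) / (s - 1)))) = c * Q ^ (1 / (s - 1)) := by
  have hexp : 1 + -((s - 2) / (s - 1)) = 1 / (s - 1) := by
    field_simp [sub_ne_zero.mpr hs]
    ring
  rw [mul_left_comm, ← Real.rpow_one_add' hQ.le (by rw [hexp]; simpa [sub_eq_zero] using hs), hexp]

lemma pow_mul_pow_eq_rpow (hQ : 0 < Q) (hs : s ≠ 1) {t : ℕ} (ht : 1 ≤ t) :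
    Q ^ (t - 1) * (c * Q ^ (-((s - 2) / (s - 1)))) ^ t
      = c ^ t * Q ^ (((t : ℝ) - s + 1) / (s - 1)) := by
  have hexp : ((t - 1 : ℕ) : ℝ) + -((s - 2) / (s - 1)) * t = ((t : ℝ) - s + 1) / (s - 1) := by
    rw [Nat.cast_sub ht]
    field_simp [sub_ne_zero.mpr hs]
    ring
  rw [mul_pow, ← Real.rpow_natCast (Q ^ _) t, ← Real.rpow_mul hQ.le, ← Real.rpow_natCast Q,
    ← hexp, Real.rpow_add hQ]
  ring

lemma sum_choose_mul_rpow_le (hQ : 1 ≤ Q) (hc0 : 0 ≤ c) (hc1 : c ≤ 1) {k m s : ℕ}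
    (hs : k + s = 2 * m) (hs2 : 2 ≤ s) :
    ∑ u ∈ (Icc ((k + 2) / 2) m).erase m, (m.choose u : ℝ) * u.choose (2 * u - k) *
        (c ^ (2 * u - k) * Q ^ ((((2 * u - k : ℕ) : ℝ) - s + 1) / (s - 1)))
      ≤ 3 ^ m * Q ^ (-1 / ((s : ℝ) - 1)) := by
  have hs1 : (1 : ℝ) < s := by exact_mod_cast hs2
  have hterm : ∀ u ∈ (Icc ((k + 2) / 2) m).erase m, (m.choose u : ℝ) * u.choose (2 * u - k) *
      (c ^ (2 * u - k) * Q ^ ((((2 * u - k : ℕ) : ℝ) - s + 1) / (s - 1)))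
        ≤ m.choose u * 2 ^ u * (1 * Q ^ (-1 / ((s : ℝ) - 1))) := by
    intro u hu
    obtain ⟨hum, hu⟩ := mem_erase.mp hu
    rw [mem_Icc] at hu
    -- `2 * u - k` has the parity of `s = 2 * m - k`, so for `u < m` it is at most `s - 2`
    have hts : ((2 * u - k : ℕ) : ℝ) + 2 ≤ s := by exact_mod_cast (by omega : 2 * u - k + 2 ≤ s)
    gcongr _ * ?_ * (?_ * ?_)
    · exact_mod_cast Nat.choose_le_two_pow u _
    · exact pow_le_one₀ hc0 hc1
    · exact Real.rpow_le_rpow_of_exponent_le hQ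
        (div_le_div_of_nonneg_right (by linarith) (by linarith))
  have hbinom : ∑ u ∈ range (m + 1), (m.choose u : ℝ) * 2 ^ u = 3 ^ m := by
    rw [show (3 : ℝ) = 2 + 1 by norm_num, add_pow]
    simp [mul_comm]
  refine (sum_le_sum hterm).trans ?_
  simp only [one_mul, ← sum_mul]
  gcongr
  refine hbinom ▸ sum_le_sum_of_subset_of_nonneg (fun u hu => ?_) fun _ _ _ => by positivity
  have := (mem_Icc.mp (mem_of_mem_erase hu)).2
  rw [mem_range]
  omega

end Exponents

theorem statement17_general [Fintype F] {m k s : ℕ} (hk4 : 4 ≤ k)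
    (hs : k + s = 2 * m) (hs2 : 2 ≤ s)
    (P Q : Fin m → (Fin k → F))
    (hgen : ∀ T : Finset (Fin m ⊕ Fin m), T.card ≤ k →
      LinearIndependent F (fun t : {x // x ∈ T} => Sum.elim P Q (t : Fin m ⊕ Fin m)))
    (L : Fin m → Submodule F (Fin k → F))
    (hL : ∀ i, L i = Submodule.span F {P i, Q i})
    (ΩF : Finset (Pt F k)) (hΩF : ∀ x, x ∈ ΩF ↔ ∃ i, x.submodule ≤ L i)
    (Qr : ℝ) (hQr : Qr = (Fintype.card F : ℝ) + 1)
    (c : ℝ) (hc0 : 0 < c) (hc1 : c < 1)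
    (p : ℝ) (hp : p = c * Qr ^ (-(((s : ℝ) - 2) / ((s : ℝ) - 1))))
    (hp0 : 0 < p) :
    (∀ i, c * Qr ^ ((1 : ℝ) / ((s : ℝ) - 1))
        ≤ expec p ΩF (fun Γ => (Vline (L i) Γ : ℝ))) ∧
    (expec p ΩF (fun Γ => (Xu L m Γ : ℝ))
        ≤ c ^ s * (m.choose s : ℝ) * Qr ^ ((1 : ℝ) / ((s : ℝ) - 1))) ∧
    (expec p ΩF (fun Γ => (Xtot L Γ : ℝ))
        ≤ c ^ s * (m.choose s : ℝ) * Qr ^ ((1 : ℝ) / ((s : ℝ) - 1))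
          + 3 ^ m * Qr ^ (-(1 : ℝ) / ((s : ℝ) - 1))) := by
  obtain rfl : L = fun i => Submodule.span F {P i, Q i} := funext hL
  set L := fun i => Submodule.span F {P i, Q i}
  have hv : InGeneralPosition F k (Sum.elim P Q) := hgen
  have hΩ : ∀ x : Pt F k, (∃ i, x.submodule ≤ L i) → x ∈ ΩF := fun x hx => (hΩF x).mpr hx
  have hQ1 : 1 ≤ Qr := by rw [hQr]; linarith [(Fintype.card F).cast_nonneg (α := ℝ)]
  have hs1 : (s : ℝ) ≠ 1 := by exact_mod_cast (by omega : s ≠ 1)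
  have hXu : ∀ u, k + 1 ≤ 2 * u → expec p ΩF (fun Γ => (Xu L u Γ : ℝ)) ≤
      m.choose u * u.choose (2 * u - k) *
        (c ^ (2 * u - k) * Qr ^ ((((2 * u - k : ℕ) : ℝ) - s + 1) / (s - 1))) := fun u hu =>
    (expec_Xu_le p hv hk4 hΩ hp0.le (by omega)).trans_eq <| by
      rw [← hQr, hp, pow_mul_pow_eq_rpow (by linarith) hs1 (by omega)]
  have hXm : expec p ΩF (fun Γ => (Xu L m Γ : ℝ)) ≤ c ^ s * m.choose s * Qr ^ (1 / ((s : ℝ) - 1)) :=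
    (hXu m (by omega)).trans_eq <| by
      rw [show 2 * m - k = s by omega, Nat.choose_self, show (s : ℝ) - s + 1 = 1 by ring]
      push_cast
      ring
  refine ⟨fun i => ?_, hXm, ?_⟩
  · rw [expec_Vline_span_pair p hv (by omega) hΩ, ← hQr, hp, mul_mul_rpow_eq (by linarith) hs1]
  · have hmem : m ∈ Icc ((k + 2) / 2) m := mem_Icc.mpr ⟨by omega, le_rfl⟩
    simp only [Xtot, Nat.cast_sum]
    rw [expec_sum, ← sum_erase_add _ _ hmem, add_comm]
    refine add_le_add hXm ((sum_le_sum fun u hu => hXu u ?_).trans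
      (sum_choose_mul_rpow_le hQ1 hc0.le hc1.le hs hs2))
    have := (mem_Icc.mp (mem_of_mem_erase hu)).1
    omega

/-- for `s ≥ 2`, `0 < c < 1` and `p = c·Q^{-(s-2)/(s-1)}`:
(a) `E[V_i] ≥ c·Q^{1/(s-1)}`; (b) `E[X_m] ≤ c^s·binom(m,s)·Q^{1/(s-1)}`;
(c) `E[X] ≤ c^s·binom(m,s)·Q^{1/(s-1)} + 3^m·Q^{-1/(s-1)}`. -/
theorem statement17 [Fintype F] {m k s : ℕ} (hm : 2 ≤ m) (hk4 : 4 ≤ k)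
    (hkm : k + 1 ≤ 2 * m) (hmk : m ≤ k) (hs : k + s = 2 * m) (hs2 : 2 ≤ s)
    (P Q : Fin m → (Fin k → F))
    (hgen : ∀ T : Finset (Fin m ⊕ Fin m), T.card ≤ k →
      LinearIndependent F (fun t : {x // x ∈ T} => Sum.elim P Q (t : Fin m ⊕ Fin m)))
    (L : Fin m → Submodule F (Fin k → F))
    (hL : ∀ i, L i = Submodule.span F {P i, Q i})
    (ΩF : Finset (Pt F k)) (hΩF : ∀ x, x ∈ ΩF ↔ ∃ i, x.submodule ≤ L i)
    (Qr : ℝ) (hQr : Qr = (Fintype.card F : ℝ) + 1)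
    (c : ℝ) (hc0 : 0 < c) (hc1 : c < 1)
    (p : ℝ) (hp : p = c * Qr ^ (-(((s : ℝ) - 2) / ((s : ℝ) - 1))))
    (hp0 : 0 < p) (hp1 : p < 1) :
    (∀ i, c * Qr ^ ((1 : ℝ) / ((s : ℝ) - 1))
        ≤ expec p ΩF (fun Γ => (Vline (L i) Γ : ℝ))) ∧
    (expec p ΩF (fun Γ => (Xu L m Γ : ℝ))
        ≤ c ^ s * (m.choose s : ℝ) * Qr ^ ((1 : ℝ) / ((s : ℝ) - 1))) ∧
    (expec p ΩF (fun Γ => (Xtot L Γ : ℝ))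
        ≤ c ^ s * (m.choose s : ℝ) * Qr ^ ((1 : ℝ) / ((s : ℝ) - 1))
          + 3 ^ m * Qr ^ (-(1 : ℝ) / ((s : ℝ) - 1))) :=
  statement17_general hk4 hs hs2 P Q hgen L hL ΩF hΩF Qr hQr c hc0 hc1 p hp hp0
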